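/- For any controls α ∈ 𝖠 and β ∈ 𝖡, the limit of the joint cumulative cost of the coupling equals the difference of the individual limits: lim_{N→∞} C^{γ(α,β)}_N = lim_{N→∞} C^α_N − lim_{N→∞} C^β_N. -/

import Mathlib

open MeasureTheory Filter Set
open scoped Classical

noncomputable section

namespace ZSG

variable {Ω : Type} [MeasurableSpace Ω]
variable {Γ1 : Type} [Fintype Γ1] [DecidableEq Γ1] [Nontrivial Γ1] [MeasurableSpace Γ1]
variable {Γ2 : Type} [Fintype Γ2] [DecidableEq Γ2] [Nontrivial Γ2] [MeasurableSpace Γ2]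

/-- The stochastic data of the finite-horizon two-player zero-sum switching game. -/
structure Data (Ω : Type) [m0 : MeasurableSpace Ω] (Γ1 Γ2 : Type) where
  /-- the underlying probability measure -/
  μ : Measure Ω
  prob : IsProbabilityMeasure μ
  /-- the (Brownian) filtration -/
  filt : Filtration ℝ m0
  /-- the finite horizon -/
  T : ℝ
  Tpos : 0 < T
  /-- running reward paid by player 2 to player 1 in joint mode `(i,j)` -/
  f : Γ1 → Γ2 → ℝ → Ω → ℝ
  /-- terminal reward paid by player 2 to player 1 in joint mode `(i,j)` -/
  h : Γ1 → Γ2 → Ω → ℝ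
  /-- switching costs of player 1 -/
  gh : Γ1 → Γ1 → ℝ → Ω → ℝ
  /-- switching costs of player 2 -/
  gc : Γ2 → Γ2 → ℝ → Ω → ℝ

/-- A switching control: a sequence of nondecreasing stopping times bounded by `T`, a.s.
finitely many switches before `T`, with `F_{σ n}`-measurable mode choices, no two switches of
the same player at the same instant before `T` and a frozen mode at `T`. -/
structure Control (D : Data Ω Γ1 Γ2) (Γ : Type) [MeasurableSpace Γ] where
  τ : ℕ → Ω → ℝ
  ξ : ℕ → Ω → Γ
  stopping : ∀ n, IsStoppingTime D.filt (fun ω => ((τ n ω : ℝ) : WithTop ℝ))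
  mem_Icc : ∀ n ω, τ n ω ∈ Icc (0:ℝ) D.T
  mono : ∀ n, ∀ᵐ ω ∂D.μ, τ n ω ≤ τ (n+1) ω
  no_acc : D.μ {ω | ∀ n, τ n ω < D.T} = 0
  meas : ∀ n, @Measurable Ω Γ ((stopping n).measurableSpace) _ (ξ n)
  strict : ∀ n, 1 ≤ n → ∀ᵐ ω ∂D.μ, τ n ω < D.T → τ n ω < τ (n+1) ω ∧ ξ n ω ≠ ξ (n-1) ω
  stay : ∀ n, 1 ≤ n → ∀ᵐ ω ∂D.μ, τ n ω = D.T → ξ n ω = ξ (n-1) ω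

/-- Cumulative switching cost of the first `N` switches of player 1. -/
def cost1 (D : Data Ω Γ1 Γ2) (A : Control D Γ1) (N : ℕ) (ω : Ω) : ℝ :=
  ∑ n ∈ Finset.range N, D.gh (A.ξ n ω) (A.ξ (n+1) ω) (A.τ (n+1) ω) ω

/-- Cumulative switching cost of the first `N` switches of player 2. -/
def cost2 (D : Data Ω Γ1 Γ2) (B : Control D Γ2) (N : ℕ) (ω : Ω) : ℝ :=
  ∑ n ∈ Finset.range N, D.gc (B.ξ n ω) (B.ξ (n+1) ω) (B.τ (n+1) ω) ω

/-- The limit of the cumulative costs exists a.s. and is square integrable. -/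
def SqLim (μ : Measure Ω) (c : ℕ → Ω → ℝ) : Prop :=
  ∃ L : Ω → ℝ, (∀ᵐ ω ∂μ, Tendsto (fun N => c N ω) atTop (nhds (L ω))) ∧ MemLp L 2 μ

/-- Square-integrable controls for player 1. -/
def SqInt1 (D : Data Ω Γ1 Γ2) (A : Control D Γ1) : Prop := SqLim D.μ (cost1 D A)

/-- Square-integrable controls for player 2. -/
def SqInt2 (D : Data Ω Γ1 Γ2) (B : Control D Γ2) : Prop := SqLim D.μ (cost2 D B)

/-- A control starting at time `s` in mode `i`. -/
def Starts1 (D : Data Ω Γ1 Γ2) (A : Control D Γ1) (s : ℝ) (i : Γ1) : Prop :=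
  (∀ ω, A.τ 0 ω = s) ∧ ∀ ω, A.ξ 0 ω = i

/-- A control starting at time `s` in mode `j`. -/
def Starts2 (D : Data Ω Γ1 Γ2) (B : Control D Γ2) (s : ℝ) (j : Γ2) : Prop :=
  (∀ ω, B.τ 0 ω = s) ∧ ∀ ω, B.ξ 0 ω = j

/-- The index pair `(r_n, s_n)` of the coupling of two controls. -/
def cplIdx (σ τ : ℕ → Ω → ℝ) : ℕ → Ω → ℕ × ℕ
  | 0, _ => (0, 0)
  | 1, _ => (1, 1)
  | (n+2), ω =>
    let p := cplIdx σ τ (n+1) ω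
    (p.1 + (if σ p.1 ω ≤ τ p.2 ω then 1 else 0),
     p.2 + (if τ p.2 ω < σ p.1 ω then 1 else 0))

/-- The switching times `ρ_n = σ_{r_n} ∧ τ_{s_n}` of the coupling. -/
def cplRho (σ τ : ℕ → Ω → ℝ) (n : ℕ) (ω : Ω) : ℝ :=
  min (σ (cplIdx σ τ n ω).1 ω) (τ (cplIdx σ τ n ω).2 ω)

/-- The joint modes `γ_n` of the coupling; player 1's switch is implemented first at ties. -/
def cplGam (T : ℝ) (σ : ℕ → Ω → ℝ) (ξ : ℕ → Ω → Γ1) (τ : ℕ → Ω → ℝ) (ζ : ℕ → Ω → Γ2) :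
    ℕ → Ω → Γ1 × Γ2
  | 0, ω => (ξ 0 ω, ζ 0 ω)
  | (n+1), ω =>
    let p := cplIdx σ τ (n+1) ω
    let prev := cplGam T σ ξ τ ζ n ω
    if σ p.1 ω ≤ τ p.2 ω ∧ σ p.1 ω < T then (ξ p.1 ω, prev.2)
    else if τ p.2 ω < σ p.1 ω then (prev.1, ζ p.2 ω)
    else prev

/-- Joint cumulative cost `C_N = Σ_{n=1}^N [ĝ - ǧ]` of a joint switching sequence `(ρ, γ)`. -/
def seqCost (D : Data Ω Γ1 Γ2) (ρ : ℕ → Ω → ℝ) (γ : ℕ → Ω → Γ1 × Γ2) (N : ℕ) (ω : Ω) : ℝ :=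
  ∑ n ∈ Finset.range N,
    (D.gh (γ n ω).1 (γ (n+1) ω).1 (ρ (n+1) ω) ω - D.gc (γ n ω).2 (γ (n+1) ω).2 (ρ (n+1) ω) ω)

/-- The piecewise-constant joint mode indicator `u_t`. -/
def seqU (ρ : ℕ → Ω → ℝ) (γ : ℕ → Ω → Γ1 × Γ2) (t : ℝ) (ω : Ω) : Γ1 × Γ2 :=
  γ (sInf {n : ℕ | t ≤ ρ (n+1) ω}) ω

/-- Admissibility of a joint switching sequence: `sup_N |C_N| ∈ L²`. -/
def Admissible (D : Data Ω Γ1 Γ2) (ρ : ℕ → Ω → ℝ) (γ : ℕ → Ω → Γ1 × Γ2) : Prop :=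
  (∀ᵐ ω ∂D.μ, BddAbove (Set.range fun N => |seqCost D ρ γ N ω|)) ∧
  MemLp (fun ω => ⨆ N, |seqCost D ρ γ N ω|) 2 D.μ

/-- The total reward `∫ f(u) dt − Σ (ĝ − ǧ) + h(u_T)` of a joint switching sequence. -/
def seqPayoff (D : Data Ω Γ1 Γ2) (s : ℝ) (ρ : ℕ → Ω → ℝ) (γ : ℕ → Ω → Γ1 × Γ2) (ω : Ω) : ℝ :=
  (∫ t in s..D.T, D.f (seqU ρ γ t ω).1 (seqU ρ γ t ω).2 t ω)
  - limUnder atTop (fun N => seqCost D ρ γ N ω)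
  + D.h (seqU ρ γ D.T ω).1 (seqU ρ γ D.T ω).2 ω

/-- The conditional payoff `J^{i,j}_s(γ(α,β))` of the coupled control. -/
def Jc (D : Data Ω Γ1 Γ2) (s : ℝ) (A : Control D Γ1) (B : Control D Γ2) : Ω → ℝ :=
  condExp (D.filt s) D.μ (seqPayoff D s (cplRho A.τ B.τ) (cplGam D.T A.τ A.ξ B.τ B.ξ))

/-- `V` is the essential supremum of the family `F`. -/
def IsEssSupFam {ι : Sort*} (μ : Measure Ω) (F : ι → Ω → ℝ) (V : Ω → ℝ) : Prop :=
  (∀ i, F i ≤ᵐ[μ] V) ∧ ∀ W : Ω → ℝ, (∀ i, F i ≤ᵐ[μ] W) → V ≤ᵐ[μ] W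

/-- `V` is the essential infimum of the family `F`. -/
def IsEssInfFam {ι : Sort*} (μ : Measure Ω) (F : ι → Ω → ℝ) (V : Ω → ℝ) : Prop :=
  (∀ i, V ≤ᵐ[μ] F i) ∧ ∀ W : Ω → ℝ, (∀ i, W ≤ᵐ[μ] F i) → W ≤ᵐ[μ] V

/-- The square-integrable controls of player 1 starting at `(s,i)`. -/
def ASet (D : Data Ω Γ1 Γ2) (s : ℝ) (i : Γ1) :=
  {A : Control D Γ1 // Starts1 D A s i ∧ SqInt1 D A}

/-- The square-integrable controls of player 2 starting at `(s,j)`. -/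
def BSet (D : Data Ω Γ1 Γ2) (s : ℝ) (j : Γ2) :=
  {B : Control D Γ2 // Starts2 D B s j ∧ SqInt2 D B}

/-- `V` is the lower value `esssup_α essinf_β J(γ(α,β))` of the switching game. -/
def IsLowerValue (D : Data Ω Γ1 Γ2) (s : ℝ) (i : Γ1) (j : Γ2) (V : Ω → ℝ) : Prop :=
  ∃ I : ASet D s i → Ω → ℝ,
    (∀ A : ASet D s i, IsEssInfFam D.μ (fun B : BSet D s j => Jc D s A.1 B.1) (I A)) ∧
    IsEssSupFam D.μ I V

/-- `V` is the upper value `essinf_β esssup_α J(γ(α,β))` of the switching game. -/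
def IsUpperValue (D : Data Ω Γ1 Γ2) (s : ℝ) (i : Γ1) (j : Γ2) (V : Ω → ℝ) : Prop :=
  ∃ I : BSet D s j → Ω → ℝ,
    (∀ B : BSet D s j, IsEssSupFam D.μ (fun A : ASet D s i => Jc D s A.1 B.1) (I B)) ∧
    IsEssInfFam D.μ I V

/-- The interconnected lower barrier `L^{i,j}(Y) = max_{i₁ ≠ i} (Y^{i₁,j} − ĝ^{i,i₁})`. -/
def lowB (D : Data Ω Γ1 Γ2) (Y : Γ1 → Γ2 → ℝ → Ω → ℝ) (i : Γ1) (j : Γ2) (t : ℝ) (ω : Ω) : ℝ :=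
  ⨆ i1 : {i1 : Γ1 // i1 ≠ i}, (Y i1.1 j t ω - D.gh i i1.1 t ω)

/-- The interconnected upper barrier `U^{i,j}(Y) = min_{j₁ ≠ j} (Y^{i,j₁} + ǧ^{j,j₁})`. -/
def upB (D : Data Ω Γ1 Γ2) (Y : Γ1 → Γ2 → ℝ → Ω → ℝ) (i : Γ1) (j : Γ2) (t : ℝ) (ω : Ω) : ℝ :=
  ⨅ j1 : {j1 : Γ2 // j1 ≠ j}, (Y i j1.1 t ω + D.gc j j1.1 t ω)

/-- A solution `(Y, Z, K)` of the system of doubly reflected BSDEs with interconnected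
bilateral obstacles; the stochastic integral `∫ Z dB` is represented by the square-integrable
continuous martingale `M`. -/
structure Solution (D : Data Ω Γ1 Γ2) where
  Y : Γ1 → Γ2 → ℝ → Ω → ℝ
  M : Γ1 → Γ2 → ℝ → Ω → ℝ
  Kp : Γ1 → Γ2 → ℝ → Ω → ℝ
  Km : Γ1 → Γ2 → ℝ → Ω → ℝ
  Y_adapted : ∀ i j, Adapted D.filt (fun t => Y i j t)
  Y_cont : ∀ i j ω, ContinuousOn (fun t => Y i j t ω) (Icc 0 D.T)
  Y_sq : ∀ i j, MemLp (fun ω => ⨆ t : Icc (0:ℝ) D.T, |Y i j t.1 ω|) 2 D.μ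
  M_mart : ∀ i j, Martingale (fun t => M i j t) D.filt D.μ
  M_cont : ∀ i j ω, ContinuousOn (fun t => M i j t ω) (Icc 0 D.T)
  M_zero : ∀ i j ω, M i j 0 ω = 0
  M_sq : ∀ i j, MemLp (M i j D.T) 2 D.μ
  K_adapted : ∀ i j, Adapted D.filt (fun t => Kp i j t) ∧ Adapted D.filt (fun t => Km i j t)
  K_zero : ∀ i j ω, Kp i j 0 ω = 0 ∧ Km i j 0 ω = 0
  K_mono : ∀ i j ω, MonotoneOn (fun t => Kp i j t ω) (Icc 0 D.T) ∧
    MonotoneOn (fun t => Km i j t ω) (Icc 0 D.T)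
  K_cont : ∀ i j ω, ContinuousOn (fun t => Kp i j t ω) (Icc 0 D.T) ∧
    ContinuousOn (fun t => Km i j t ω) (Icc 0 D.T)
  K_sq : ∀ i j, MemLp (fun ω => Kp i j D.T ω + Km i j D.T ω) 2 D.μ
  f_sq : ∀ i j, MemLp (fun ω => ∫ t in (0:ℝ)..D.T, |D.f i j t ω|) 2 D.μ
  h_sq : ∀ i j, MemLp (D.h i j) 2 D.μ
  bsde : ∀ i j, ∀ s ∈ Icc (0:ℝ) D.T, ∀ᵐ ω ∂D.μ,
    Y i j s ω = D.h i j ω + (∫ t in s..D.T, D.f i j t ω)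
      + (Kp i j D.T ω - Kp i j s ω) - (Km i j D.T ω - Km i j s ω)
      - (M i j D.T ω - M i j s ω)
  barriers : ∀ i j, ∀ᵐ ω ∂D.μ, ∀ t ∈ Icc (0:ℝ) D.T,
    lowB D Y i j t ω ≤ Y i j t ω ∧ Y i j t ω ≤ upB D Y i j t ω
  skor_p : ∀ i j, ∀ᵐ ω ∂D.μ, ∀ a b : ℝ, 0 ≤ a → a ≤ b → b ≤ D.T →
    (∀ r ∈ Icc a b, lowB D Y i j r ω < Y i j r ω) → Kp i j b ω = Kp i j a ω
  skor_m : ∀ i j, ∀ᵐ ω ∂D.μ, ∀ a b : ℝ, 0 ≤ a → a ≤ b → b ≤ D.T →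
    (∀ r ∈ Icc a b, Y i j r ω < upB D Y i j r ω) → Km i j b ω = Km i j a ω

/-- The mode-switched stochastic integral `∫_{ρ_0}^{ρ_N} Z^{u_t} dB_t`. -/
def seqM (D : Data Ω Γ1 Γ2) (S : Solution D) (ρ : ℕ → Ω → ℝ) (γ : ℕ → Ω → Γ1 × Γ2)
    (N : ℕ) (ω : Ω) : ℝ :=
  ∑ n ∈ Finset.range N,
    (S.M (γ n ω).1 (γ n ω).2 (ρ (n+1) ω) ω - S.M (γ n ω).1 (γ n ω).2 (ρ n ω) ω)

/-- The mode-switched stochastic integral stopped at time `t`, `M^u_t = ∫_{ρ_0}^{t} Z^{u_r} dB_r`. -/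
def seqMAt (D : Data Ω Γ1 Γ2) (S : Solution D) (ρ : ℕ → Ω → ℝ) (γ : ℕ → Ω → Γ1 × Γ2)
    (t : ℝ) (ω : Ω) : ℝ :=
  limUnder atTop (fun N => ∑ n ∈ Finset.range N,
    (S.M (γ n ω).1 (γ n ω).2 (min t (ρ (n+1) ω)) ω - S.M (γ n ω).1 (γ n ω).2 (min t (ρ n ω)) ω))

/-- First hitting time after `s` of `Y^{i,j}` on its lower barrier (with value `T` if none). -/
def hitLow (D : Data Ω Γ1 Γ2) (S : Solution D) (i : Γ1) (j : Γ2) (s : ℝ) (ω : Ω) : ℝ :=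
  if _ : {t | t ∈ Icc s D.T ∧ S.Y i j t ω = lowB D S.Y i j t ω}.Nonempty
  then min (sInf {t | t ∈ Icc s D.T ∧ S.Y i j t ω = lowB D S.Y i j t ω}) D.T
  else D.T

/-- First hitting time after `s` of `Y^{i,j}` on its upper barrier (with value `T` if none). -/
def hitUp (D : Data Ω Γ1 Γ2) (S : Solution D) (i : Γ1) (j : Γ2) (s : ℝ) (ω : Ω) : ℝ :=
  if _ : {t | t ∈ Icc s D.T ∧ S.Y i j t ω = upB D S.Y i j t ω}.Nonempty
  then min (sInf {t | t ∈ Icc s D.T ∧ S.Y i j t ω = upB D S.Y i j t ω}) D.T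
  else D.T

/-- The argmax switching selector `𝓛^{i,j}_t(Y)`. -/
def selL (D : Data Ω Γ1 Γ2) (S : Solution D) (i : Γ1) (j : Γ2) (t : ℝ) (ω : Ω) : Γ1 :=
  Classical.choose (Finset.exists_max_image (Finset.univ.erase i)
    (fun i1 => S.Y i1 j t ω - D.gh i i1 t ω)
    (by obtain ⟨b, hb⟩ := exists_ne i
        exact ⟨b, Finset.mem_erase.mpr ⟨hb, Finset.mem_univ b⟩⟩))

/-- The argmin switching selector `𝓤^{i,j}_t(Y)`. -/
def selU (D : Data Ω Γ1 Γ2) (S : Solution D) (i : Γ1) (j : Γ2) (t : ℝ) (ω : Ω) : Γ2 :=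
  Classical.choose (Finset.exists_min_image (Finset.univ.erase j)
    (fun j1 => S.Y i j1 t ω + D.gc j j1 t ω)
    (by obtain ⟨b, hb⟩ := exists_ne j
        exact ⟨b, Finset.mem_erase.mpr ⟨hb, Finset.mem_univ b⟩⟩))

/-- The equilibrium joint sequence `(ρ_n, γ_n)` built from the barrier hitting times of the
DRBSDE solution and the argmax/argmin selectors. -/
def eqSt (D : Data Ω Γ1 Γ2) (S : Solution D) (s : ℝ) (i : Γ1) (j : Γ2) :
    ℕ → Ω → ℝ × (Γ1 × Γ2)
  | 0, _ => (s, (i, j))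
  | (n+1), ω =>
    let p := eqSt D S s i j n ω
    let a := hitLow D S p.2.1 p.2.2 p.1 ω
    let b := hitUp D S p.2.1 p.2.2 p.1 ω
    let ρ := min a b
    let γ := if a ≤ b ∧ a < D.T then (selL D S p.2.1 p.2.2 ρ ω, p.2.2)
             else if b < a then (p.2.1, selU D S p.2.1 p.2.2 ρ ω)
             else p.2
    (ρ, γ)

/-- The equilibrium switching times `ρ_n`. -/
def eqRho (D : Data Ω Γ1 Γ2) (S : Solution D) (s : ℝ) (i : Γ1) (j : Γ2) (n : ℕ) (ω : Ω) : ℝ :=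
  (eqSt D S s i j n ω).1

/-- The equilibrium joint modes `γ_n`. -/
def eqGam (D : Data Ω Γ1 Γ2) (S : Solution D) (s : ℝ) (i : Γ1) (j : Γ2) (n : ℕ) (ω : Ω) :
    Γ1 × Γ2 :=
  (eqSt D S s i j n ω).2

/-- The indices at which player 1's component of the equilibrium joint mode changes. -/
def idx1 (D : Data Ω Γ1 Γ2) (S : Solution D) (s : ℝ) (i : Γ1) (j : Γ2) : ℕ → Ω → ℕ
  | 0, _ => 0
  | (k+1), ω =>
    let m := idx1 D S s i j k ω
    if hp : ∃ n, m < n ∧ (eqGam D S s i j n ω).1 ≠ (eqGam D S s i j m ω).1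
    then Nat.find hp else m

/-- Player 1's equilibrium switching times `σ*_k`. -/
def sigStar (D : Data Ω Γ1 Γ2) (S : Solution D) (s : ℝ) (i : Γ1) (j : Γ2) : ℕ → Ω → ℝ
  | 0, _ => s
  | (k+1), ω =>
    if idx1 D S s i j (k+1) ω = idx1 D S s i j k ω then D.T
    else eqRho D S s i j (idx1 D S s i j (k+1) ω) ω

/-- Player 1's equilibrium modes `ξ*_k`. -/
def xiStar (D : Data Ω Γ1 Γ2) (S : Solution D) (s : ℝ) (i : Γ1) (j : Γ2) (k : ℕ) (ω : Ω) : Γ1 :=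
  (eqGam D S s i j (idx1 D S s i j k ω) ω).1

/-- The state `(ř_n, ρ_n, γ_n, τ̌_n)` of player 2's equilibrium-response to an arbitrary
control `(σ, ξ)` of player 1, built from upper-barrier hitting times and the argmin selector. -/
def resp (D : Data Ω Γ1 Γ2) (S : Solution D) (i : Γ1) (j : Γ2) (s : ℝ)
    (σ : ℕ → Ω → ℝ) (ξ : ℕ → Ω → Γ1) : ℕ → Ω → ℕ × ℝ × (Γ1 × Γ2) × ℝ
  | 0, _ => (0, s, (i, j), s)
  | 1, ω =>
    let tc := hitUp D S i j s ω
    let ρ := min (σ 1 ω) tc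
    let γ := if σ 1 ω ≤ tc ∧ σ 1 ω < D.T then (ξ 1 ω, j)
             else if tc < σ 1 ω then (i, selU D S i j ρ ω)
             else (i, j)
    (1, ρ, γ, tc)
  | (n+2), ω =>
    let q := resp D S i j s σ ξ (n+1) ω
    let r := q.1 + (if σ q.1 ω ≤ q.2.2.2 then 1 else 0)
    let tc := hitUp D S q.2.2.1.1 q.2.2.1.2 q.2.1 ω
    let ρ := min (σ r ω) tc
    let γ := if σ r ω ≤ tc ∧ σ r ω < D.T then (ξ r ω, q.2.2.1.2)
             else if tc < σ r ω then (q.2.2.1.1, selU D S q.2.2.1.1 q.2.2.1.2 ρ ω)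
             else q.2.2.1
    (r, ρ, γ, tc)

/-- The switching times of the coupling of `(σ,ξ)` with player 2's equilibrium response. -/
def respRho (D : Data Ω Γ1 Γ2) (S : Solution D) (i : Γ1) (j : Γ2) (s : ℝ)
    (σ : ℕ → Ω → ℝ) (ξ : ℕ → Ω → Γ1) (n : ℕ) (ω : Ω) : ℝ :=
  (resp D S i j s σ ξ n ω).2.1

/-- The joint modes of the coupling of `(σ,ξ)` with player 2's equilibrium response. -/
def respGam (D : Data Ω Γ1 Γ2) (S : Solution D) (i : Γ1) (j : Γ2) (s : ℝ)
    (σ : ℕ → Ω → ℝ) (ξ : ℕ → Ω → Γ1) (n : ℕ) (ω : Ω) : Γ1 × Γ2 :=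
  (resp D S i j s σ ξ n ω).2.2.1

/-- The current-mode indicator of a single control. -/
def modeInd {Γ : Type} (σ : ℕ → Ω → ℝ) (ξ : ℕ → Ω → Γ) (t : ℝ) (ω : Ω) : Γ :=
  ξ (sInf {n : ℕ | t ≤ σ (n+1) ω}) ω

/-- Two controls are equivalent on the stochastic interval `[s, ν]`. -/
def EquivOn (D : Data Ω Γ1 Γ2) {Γ : Type} [MeasurableSpace Γ] (s : ℝ) (ν : Ω → ℝ)
    (A A' : Control D Γ) : Prop :=
  ∀ᵐ ω ∂D.μ, ∀ t, s ≤ t → t ≤ ν ω → modeInd A.τ A.ξ t ω = modeInd A'.τ A'.ξ t ω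

/-- A non-anticipative strategy for player 1. -/
structure Strat1 (D : Data Ω Γ1 Γ2) where
  map : Control D Γ2 → Control D Γ1
  na : ∀ s ∈ Icc (0:ℝ) D.T, ∀ ν : Ω → ℝ, IsStoppingTime D.filt (fun ω => ((ν ω : ℝ) : WithTop ℝ)) → (∀ ω, ν ω ∈ Icc s D.T) →
    ∀ B B' : Control D Γ2, EquivOn D s ν B B' → EquivOn D s ν (map B) (map B')
  sq : ∀ B, SqInt2 D B → SqInt1 D (map B)

/-- A non-anticipative strategy for player 2. -/
structure Strat2 (D : Data Ω Γ1 Γ2) where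
  map : Control D Γ1 → Control D Γ2
  na : ∀ s ∈ Icc (0:ℝ) D.T, ∀ ν : Ω → ℝ, IsStoppingTime D.filt (fun ω => ((ν ω : ℝ) : WithTop ℝ)) → (∀ ω, ν ω ∈ Icc s D.T) →
    ∀ A A' : Control D Γ1, EquivOn D s ν A A' → EquivOn D s ν (map A) (map A')
  sq : ∀ A, SqInt1 D A → SqInt2 D (map A)

/-- Nonnegativity of the switching costs. -/
def NonNegCosts (D : Data Ω Γ1 Γ2) : Prop :=
  (∀ i i1 t ω, 0 ≤ D.gh i i1 t ω) ∧ ∀ j j1 t ω, 0 ≤ D.gc j j1 t ω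

/-- Vanishing of the diagonal switching costs. -/
def DiagZero (D : Data Ω Γ1 Γ2) : Prop :=
  (∀ i t ω, D.gh i i t ω = 0) ∧ ∀ j t ω, D.gc j j t ω = 0

/-- Consistency (strict triangle inequality) of the switching costs. -/
def Consistent (D : Data Ω Γ1 Γ2) : Prop :=
  (∀ i1 i2 i3 : Γ1, i1 ≠ i2 → i2 ≠ i3 → ∀ t ∈ Icc (0:ℝ) D.T, ∀ᵐ ω ∂D.μ,
    D.gh i1 i3 t ω < D.gh i1 i2 t ω + D.gh i2 i3 t ω) ∧
  (∀ j1 j2 j3 : Γ2, j1 ≠ j2 → j2 ≠ j3 → ∀ t ∈ Icc (0:ℝ) D.T, ∀ᵐ ω ∂D.μ,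
    D.gc j1 j3 t ω < D.gc j1 j2 t ω + D.gc j2 j3 t ω)

/-- Terminal consistency of the terminal rewards with the switching costs. -/
def TerminalConsistent (D : Data Ω Γ1 Γ2) : Prop :=
  ∀ (i : Γ1) (j : Γ2), ∀ᵐ ω ∂D.μ,
    (⨆ i1 : {i1 : Γ1 // i1 ≠ i}, (D.h i1.1 j ω - D.gh i i1.1 D.T ω)) ≤ D.h i j ω ∧
    D.h i j ω ≤ ⨅ j1 : {j1 : Γ2 // j1 ≠ j}, (D.h i j1.1 ω + D.gc j j1.1 D.T ω)

/-- The non-free loop property: the signed cost sum around any loop in `Γ` is a.s. nonzero. -/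
def NonFreeLoop (D : Data Ω Γ1 Γ2) : Prop :=
  ∀ (N : ℕ) (p : ℕ → Γ1 × Γ2), 2 ≤ N → p (N-1) = p 0 →
    (∀ q < N-1, ∀ q' < N-1, p q = p q' → q = q') →
    (∀ q < N-1, (p (q+1)).1 = (p q).1 ∨ (p (q+1)).2 = (p q).2) →
    ∀ t ∈ Icc (0:ℝ) D.T, ∀ᵐ ω ∂D.μ,
      (∑ q ∈ Finset.range (N-1),
        (-(if (p q).1 ≠ (p (q+1)).1 then D.gh (p q).1 (p (q+1)).1 t ω else 0)
          + (if (p q).2 ≠ (p (q+1)).2 then D.gc (p q).2 (p (q+1)).2 t ω else 0))) ≠ 0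

/-- Pathwise continuity of the switching cost processes. -/
def ContCosts (D : Data Ω Γ1 Γ2) : Prop :=
  (∀ i i1 ω, ContinuousOn (fun t => D.gh i i1 t ω) (Icc 0 D.T)) ∧
  (∀ j j1 ω, ContinuousOn (fun t => D.gc j j1 t ω) (Icc 0 D.T))

end ZSG

/-!
Fix a path and let `(r_n, s_n)` be the coupling indices. Step by step, the coupled sequence
interleaves the first `r_{n+1} - 1` switches of `α` with the first `s_{n+1} - 1` switches of `β`
(a switch of `α` at `T` changes nothing: controls keep their mode at `T`, and `ĝ^{i,i} = 0`), so
`C^{γ(α,β)}_n = C^α_{r_{n+1}-1} - C^β_{s_{n+1}-1}`. Both times `σ_{r_n}` and `τ_{s_n}` eventually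
equal `T`: until then every step advances an index whose time is still below `T`, and there are
only finitely many of those. Past that point neither individual cost changes any more, so both
already equal their limits.
-/

namespace ZSG

structure HitsHorizon (T : ℝ) (σ : ℕ → ℝ) : Prop where
  mono : Monotone σ
  le_horizon : ∀ n, σ n ≤ T
  exists_eq_horizon : ∃ n, σ n = T

theorem HitsHorizon.eq_of_le {T : ℝ} {σ : ℕ → ℝ} (hσ : HitsHorizon T σ) {k m : ℕ}
    (hk : σ k = T) (hkm : k ≤ m) : σ m = T :=
  le_antisymm (hσ.le_horizon m) (hk ▸ hσ.mono hkm)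

theorem HitsHorizon.exists_common_eq_horizon {T : ℝ} {σ τ : ℕ → ℝ} (hσ : HitsHorizon T σ)
    (hτ : HitsHorizon T τ) : ∃ K, σ K = T ∧ τ K = T := by
  obtain ⟨k, hk⟩ := hσ.exists_eq_horizon
  obtain ⟨l, hl⟩ := hτ.exists_eq_horizon
  exact ⟨max k l, hσ.eq_of_le hk (le_max_left k l), hτ.eq_of_le hl (le_max_right k l)⟩

theorem sum_switch_eq_of_tendsto {Γ : Type*} {g : Γ → Γ → ℝ → ℝ} (hg : ∀ i t, g i i t = 0)
    {ξ : ℕ → Γ} {σ : ℕ → ℝ} {T L : ℝ} (hσ : HitsHorizon T σ)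
    (hstay : ∀ n, σ (n+1) = T → ξ (n+1) = ξ n) {k : ℕ} (hk : σ (k+1) = T)
    (hL : Tendsto (fun N => ∑ n ∈ Finset.range N, g (ξ n) (ξ (n+1)) (σ (n+1))) atTop (nhds L)) :
    ∑ n ∈ Finset.range k, g (ξ n) (ξ (n+1)) (σ (n+1)) = L := by
  have hconst : ∀ N ≥ k, ∑ n ∈ Finset.range N, g (ξ n) (ξ (n+1)) (σ (n+1))
      = ∑ n ∈ Finset.range k, g (ξ n) (ξ (n+1)) (σ (n+1)) := by
    intro N hN
    induction N, hN using Nat.le_induction with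
    | base => rfl
    | succ N hkN ih =>
      rw [Finset.sum_range_succ, ih, hstay N (hσ.eq_of_le hk (by omega)), hg, add_zero]
  exact tendsto_nhds_unique (tendsto_atTop_of_eventually_const hconst) hL

section Control

variable {Ω : Type} [MeasurableSpace Ω] {Γ1 Γ2 Γ : Type} [MeasurableSpace Γ] {D : Data Ω Γ1 Γ2}

theorem Control.ae_hitsHorizon (A : Control D Γ) : ∀ᵐ ω ∂D.μ, HitsHorizon D.T (A.τ · ω) := by
  filter_upwards [ae_all_iff.2 A.mono, measure_eq_zero_iff_ae_notMem.1 A.no_acc]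
    with ω hmono hreach
  obtain ⟨n, hn⟩ : ∃ n, D.T ≤ A.τ n ω := by simpa using hreach
  exact ⟨monotone_nat_of_le_succ hmono, fun n => (A.mem_Icc n ω).2,
    n, le_antisymm (A.mem_Icc n ω).2 hn⟩

theorem Control.ae_stay (A : Control D Γ) :
    ∀ᵐ ω ∂D.μ, ∀ n, A.τ (n+1) ω = D.T → A.ξ (n+1) ω = A.ξ n ω :=
  ae_all_iff.2 fun n => A.stay (n+1) (Nat.le_add_left 1 n)

end Control

section Coupling

variable {Ω : Type} {σ τ : ℕ → Ω → ℝ} {ω : Ω} {T : ℝ}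

theorem one_le_cplIdx (n : ℕ) : 1 ≤ (cplIdx σ τ (n+1) ω).1 ∧ 1 ≤ (cplIdx σ τ (n+1) ω).2 := by
  induction n with
  | zero => simp [cplIdx]
  | succ n ih =>
    simp only [cplIdx]
    split_ifs <;> omega

theorem cplIdx_succ_of_le {n : ℕ}
    (h : σ (cplIdx σ τ (n+1) ω).1 ω ≤ τ (cplIdx σ τ (n+1) ω).2 ω) :
    cplIdx σ τ (n+2) ω = ((cplIdx σ τ (n+1) ω).1 + 1, (cplIdx σ τ (n+1) ω).2) := by
  simp [cplIdx, h, not_lt.2 h]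

theorem cplIdx_succ_of_lt {n : ℕ}
    (h : τ (cplIdx σ τ (n+1) ω).2 ω < σ (cplIdx σ τ (n+1) ω).1 ω) :
    cplIdx σ τ (n+2) ω = ((cplIdx σ τ (n+1) ω).1, (cplIdx σ τ (n+1) ω).2 + 1) := by
  simp [cplIdx, h, not_le.2 h]

def cplAtHorizon (T : ℝ) (σ τ : ℕ → Ω → ℝ) (n : ℕ) (ω : Ω) : Prop :=
  σ (cplIdx σ τ n ω).1 ω = T ∧ τ (cplIdx σ τ n ω).2 ω = T

theorem cplAtHorizon_succ (hσ : HitsHorizon T (σ · ω)) {n : ℕ}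
    (h : cplAtHorizon T σ τ (n+1) ω) : cplAtHorizon T σ τ (n+2) ω := by
  obtain ⟨hr, hs⟩ := h
  rw [cplAtHorizon, cplIdx_succ_of_le (by rw [hr, hs])]
  exact ⟨hσ.eq_of_le hr (Nat.le_succ _), hs⟩

theorem cplAtHorizon_mono (hσ : HitsHorizon T (σ · ω)) {n m : ℕ}
    (h : cplAtHorizon T σ τ (n+1) ω) (hnm : n ≤ m) : cplAtHorizon T σ τ (m+1) ω := by
  induction m, hnm using Nat.le_induction with
  | base => exact h
  | succ m _ ih => exact cplAtHorizon_succ hσ ih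

/-- Before both players sit at the horizon, the player who moves is one whose index is still
below `K`, so `(K - r) + (K - s)` strictly decreases. -/
theorem cplIdx_potential_lt (hσ : HitsHorizon T (σ · ω)) (hτ : HitsHorizon T (τ · ω)) {K : ℕ}
    (hσK : σ K ω = T) (hτK : τ K ω = T) {n : ℕ} (h : ¬ cplAtHorizon T σ τ (n+1) ω) :
    (K - (cplIdx σ τ (n+2) ω).1) + (K - (cplIdx σ τ (n+2) ω).2)
      < (K - (cplIdx σ τ (n+1) ω).1) + (K - (cplIdx σ τ (n+1) ω).2) := by
  by_cases hle : σ (cplIdx σ τ (n+1) ω).1 ω ≤ τ (cplIdx σ τ (n+1) ω).2 ω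
  · have hr : (cplIdx σ τ (n+1) ω).1 < K := by
      by_contra! hKr
      have hσr := hσ.eq_of_le hσK hKr
      exact h ⟨hσr, le_antisymm (hτ.le_horizon _) (hσr ▸ hle)⟩
    rw [cplIdx_succ_of_le hle]
    omega
  · have hlt := not_le.1 hle
    have hs : (cplIdx σ τ (n+1) ω).2 < K := by
      by_contra! hKs
      have := hσ.le_horizon (cplIdx σ τ (n+1) ω).1
      rw [show τ _ ω = T from hτ.eq_of_le hτK hKs] at hlt
      linarith
    rw [cplIdx_succ_of_lt hlt]
    omega

theorem cplAtHorizon_of_potential_le (hσ : HitsHorizon T (σ · ω)) (hτ : HitsHorizon T (τ · ω))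
    {K : ℕ} (hσK : σ K ω = T) (hτK : τ K ω = T) (m : ℕ) :
    ∀ n, (K - (cplIdx σ τ (n+1) ω).1) + (K - (cplIdx σ τ (n+1) ω).2) ≤ m →
      cplAtHorizon T σ τ (n+m+1) ω := by
  induction m with
  | zero =>
    intro n hn
    rw [Nat.add_zero]
    exact ⟨hσ.eq_of_le hσK (by omega), hτ.eq_of_le hτK (by omega)⟩
  | succ m ih =>
    intro n hn
    by_cases h : cplAtHorizon T σ τ (n+1) ω
    · exact cplAtHorizon_mono hσ h (by omega)
    · have := ih (n+1) (Nat.le_of_lt_succ ((cplIdx_potential_lt hσ hτ hσK hτK h).trans_le hn))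
      rwa [show n + 1 + m = n + (m + 1) by omega] at this

theorem eventually_cplAtHorizon (hσ : HitsHorizon T (σ · ω)) (hτ : HitsHorizon T (τ · ω)) :
    ∀ᶠ n in atTop, cplAtHorizon T σ τ (n+1) ω := by
  obtain ⟨K, hσK, hτK⟩ := hσ.exists_common_eq_horizon hτ
  have h := cplAtHorizon_of_potential_le hσ hτ hσK hτK (2 * K) 0 (by omega)
  exact eventually_atTop.2 ⟨2 * K, fun n hn => cplAtHorizon_mono hσ h (by omega)⟩

theorem cplGam_eq {Γ1 Γ2 : Type} {ξ : ℕ → Ω → Γ1} {ζ : ℕ → Ω → Γ2} (hσT : ∀ k, σ k ω ≤ T)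
    (hstay : ∀ k, σ (k+1) ω = T → ξ (k+1) ω = ξ k ω) (n : ℕ) :
    cplGam T σ ξ τ ζ n ω
      = (ξ ((cplIdx σ τ (n+1) ω).1 - 1) ω, ζ ((cplIdx σ τ (n+1) ω).2 - 1) ω) := by
  induction n with
  | zero => simp [cplGam, cplIdx]
  | succ n ih =>
    obtain ⟨hr, -⟩ := one_le_cplIdx (σ := σ) (τ := τ) (ω := ω) n
    by_cases hle : σ (cplIdx σ τ (n+1) ω).1 ω ≤ τ (cplIdx σ τ (n+1) ω).2 ω
    · rw [cplIdx_succ_of_le hle]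
      by_cases hT : σ (cplIdx σ τ (n+1) ω).1 ω < T
      · simp [cplGam, hle, hT, ih]
      · have hstop : σ (cplIdx σ τ (n+1) ω).1 ω = T := le_antisymm (hσT _) (not_lt.1 hT)
        have hξ := hstay ((cplIdx σ τ (n+1) ω).1 - 1) (by rwa [Nat.sub_add_cancel hr])
        rw [Nat.sub_add_cancel hr] at hξ
        simp [cplGam, hT, not_lt.2 hle, ih, hξ]
    · rw [cplIdx_succ_of_lt (not_le.1 hle)]
      simp [cplGam, hle, not_le.1 hle, ih]

end Coupling

section Cost

variable {Ω : Type} [MeasurableSpace Ω] {Γ1 Γ2 : Type} [MeasurableSpace Γ1] [MeasurableSpace Γ2]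
  {D : Data Ω Γ1 Γ2}

theorem seqCost_cpl_eq (hdiag : DiagZero D) {A : Control D Γ1} {B : Control D Γ2} {ω : Ω}
    (hstay : ∀ k, A.τ (k+1) ω = D.T → A.ξ (k+1) ω = A.ξ k ω) (n : ℕ) :
    seqCost D (cplRho A.τ B.τ) (cplGam D.T A.τ A.ξ B.τ B.ξ) n ω
      = cost1 D A ((cplIdx A.τ B.τ (n+1) ω).1 - 1) ω
        - cost2 D B ((cplIdx A.τ B.τ (n+1) ω).2 - 1) ω := by
  induction n with
  | zero => simp [seqCost, cplIdx, cost1, cost2]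
  | succ n ih =>
    have hγ := cplGam_eq (τ := B.τ) (ζ := B.ξ) (fun k => (A.mem_Icc k ω).2) hstay
    obtain ⟨hr1, hs1⟩ := one_le_cplIdx (σ := A.τ) (τ := B.τ) (ω := ω) n
    rw [seqCost, Finset.sum_range_succ, ← seqCost, ih, hγ n, hγ (n+1), cplRho]
    by_cases hle : A.τ (cplIdx A.τ B.τ (n+1) ω).1 ω ≤ B.τ (cplIdx A.τ B.τ (n+1) ω).2 ω
    · rw [cplIdx_succ_of_le hle, min_eq_left hle]
      obtain ⟨r, hr⟩ := Nat.exists_eq_add_of_le' hr1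
      rw [hr]
      simp only [Nat.add_sub_cancel, cost1, Finset.sum_range_succ, hdiag.2]
      ring
    · rw [cplIdx_succ_of_lt (not_le.1 hle), min_eq_right (not_le.1 hle).le]
      obtain ⟨s, hs⟩ := Nat.exists_eq_add_of_le' hs1
      rw [hs]
      simp only [Nat.add_sub_cancel, cost2, Finset.sum_range_succ, hdiag.1]
      ring

end Cost

end ZSG

namespace ZSG

variable {Ω : Type} [MeasurableSpace Ω]
variable {Γ1 : Type} [Fintype Γ1] [DecidableEq Γ1] [Nontrivial Γ1] [MeasurableSpace Γ1]
variable {Γ2 : Type} [Fintype Γ2] [DecidableEq Γ2] [Nontrivial Γ2] [MeasurableSpace Γ2]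

/-- `lim C^{γ(α,β)}_N = lim C^α_N − lim C^β_N`. -/
theorem jointCost_lim_eq_sub
    (D : Data Ω Γ1 Γ2) (hdiag : DiagZero D)
    (A : Control D Γ1) (B : Control D Γ2) (CA CB : Ω → ℝ)
    (hCA : ∀ᵐ ω ∂D.μ, Tendsto (fun N => cost1 D A N ω) atTop (nhds (CA ω)))
    (hCB : ∀ᵐ ω ∂D.μ, Tendsto (fun N => cost2 D B N ω) atTop (nhds (CB ω))) :
    ∀ᵐ ω ∂D.μ, Tendsto
      (fun N => seqCost D (cplRho A.τ B.τ) (cplGam D.T A.τ A.ξ B.τ B.ξ) N ω)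
      atTop (nhds (CA ω - CB ω)) := by
  filter_upwards [A.ae_hitsHorizon, B.ae_hitsHorizon, A.ae_stay, B.ae_stay, hCA, hCB]
    with ω hA hB hAstay hBstay hCAω hCBω
  refine tendsto_const_nhds.congr' ?_
  filter_upwards [eventually_cplAtHorizon hA hB] with n ⟨hr, hs⟩
  obtain ⟨hr1, hs1⟩ := one_le_cplIdx (σ := A.τ) (τ := B.τ) (ω := ω) n
  have hcost1 : cost1 D A ((cplIdx A.τ B.τ (n+1) ω).1 - 1) ω = CA ω :=
    sum_switch_eq_of_tendsto (g := (D.gh · · · ω)) (ξ := (A.ξ · ω))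
      (hdiag.1 · · ω) hA hAstay (by rwa [Nat.sub_add_cancel hr1]) hCAω
  have hcost2 : cost2 D B ((cplIdx A.τ B.τ (n+1) ω).2 - 1) ω = CB ω :=
    sum_switch_eq_of_tendsto (g := (D.gc · · · ω)) (ξ := (B.ξ · ω))
      (hdiag.2 · · ω) hB hBstay (by rwa [Nat.sub_add_cancel hs1]) hCBω
  rw [seqCost_cpl_eq hdiag hAstay, hcost1, hcost2]

end ZSG
end
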